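/- arXiv:1804.10235 — 2 statements merged into one kernel-verified Lean document; each statement's English description precedes it below -/
import Mathlib

section
/- Let a be an irrational real number and let α = (α₁, α₂) ∈ ℝ². Suppose that 3^n α₁ → 0 (mod 1), 3^n α₂ → 0 (mod 1), and 3^n(α₁ + a α₂) → 0 (mod 1) as n → ∞. Then α₂ = 0. -/
open Filter

lemma rat_of_pow_tendsto (t : ℝ)
    (h : Tendsto (fun n : ℕ => |(3 : ℝ) ^ n * t - round ((3 : ℝ) ^ n * t)|)
      atTop (nhds 0)) : ∃ q : ℚ, t = (q : ℝ) := by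
  set ε : ℕ → ℝ := fun n => (3 : ℝ) ^ n * t - round ((3 : ℝ) ^ n * t) with hε
  obtain ⟨N, hN⟩ := (Metric.tendsto_atTop.mp h) (1/4) (by norm_num)
  have hb : ∀ n ≥ N, |ε n| < 1/4 := by
    intro n hn
    have := hN n hn
    rwa [Real.dist_eq, sub_zero, abs_abs] at this
  have hstep : ∀ n ≥ N, ε (n + 1) = 3 * ε n := by
    intro n hn
    have hd : ((round ((3:ℝ)^(n+1) * t) - 3 * round ((3:ℝ)^n * t) : ℤ) : ℝ)
        = 3 * ε n - ε (n + 1) := by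
      push_cast
      simp only [hε]
      rw [pow_succ]
      ring
    have habs : |3 * ε n - ε (n + 1)| < 1 := by
      have h1 := hb n hn
      have h2 := hb (n + 1) (le_trans hn (Nat.le_succ n))
      calc |3 * ε n - ε (n + 1)| ≤ |3 * ε n| + |ε (n + 1)| := abs_sub _ _
        _ = 3 * |ε n| + |ε (n + 1)| := by rw [abs_mul]; norm_num
        _ < 3 * (1/4) + 1/4 := by linarith
        _ = 1 := by norm_num
    have hz : (round ((3:ℝ)^(n+1) * t) - 3 * round ((3:ℝ)^n * t) : ℤ) = 0 := by
      have hA : |((round ((3:ℝ)^(n+1) * t) - 3 * round ((3:ℝ)^n * t) : ℤ) : ℝ)| < 1 := by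
        rw [hd]; exact habs
      have hB : |(round ((3:ℝ)^(n+1) * t) - 3 * round ((3:ℝ)^n * t) : ℤ)| < 1 := by
        exact_mod_cast hA
      rw [abs_lt] at hB
      omega
    rw [hz] at hd
    simp at hd
    linarith
  have hgeo : ∀ k : ℕ, ε (N + k) = 3 ^ k * ε N := by
    intro k
    induction k with
    | zero => simp
    | succ k ih =>
      have := hstep (N + k) (Nat.le_add_right N k)
      rw [show N + (k + 1) = N + k + 1 from rfl, this, ih, pow_succ]
      ring
  have hεN : ε N = 0 := by
    by_contra hne
    have hpos : 0 < |ε N| := abs_pos.mpr hne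
    obtain ⟨k, hk⟩ := pow_unbounded_of_one_lt (1 / |ε N|) (by norm_num : (1:ℝ) < 3)
    have h1' : (1:ℝ) < 3 ^ k * |ε N| := by
      have := mul_lt_mul_of_pos_right hk hpos
      rwa [one_div, inv_mul_cancel₀ hpos.ne'] at this
    have hbk := hb (N + k) (Nat.le_add_right N k)
    rw [hgeo k, abs_mul, abs_pow, abs_of_pos (by norm_num : (0:ℝ) < 3)] at hbk
    linarith
  have hkey : (3:ℝ)^N * t = round ((3:ℝ)^N * t) := by
    simp only [hε] at hεN
    linarith
  refine ⟨(round ((3:ℝ)^N * t) : ℚ) / 3 ^ N, ?_⟩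
  push_cast
  rw [← hkey]
  field_simp

/-- If `a` is irrational and `3^n α₁ → 0 (mod 1)`, `3^n α₂ → 0 (mod 1)` and
`3^n(α₁ + a α₂) → 0 (mod 1)`, then `α₂ = 0`. -/
theorem kenyon_eigenvalue_vanishes (a : ℝ) (ha : Irrational a) (α₁ α₂ : ℝ)
    (h1 : Tendsto (fun n : ℕ => |(3 : ℝ) ^ n * α₁ - round ((3 : ℝ) ^ n * α₁)|)
      atTop (nhds 0))
    (h2 : Tendsto (fun n : ℕ => |(3 : ℝ) ^ n * α₂ - round ((3 : ℝ) ^ n * α₂)|)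
      atTop (nhds 0))
    (h3 : Tendsto (fun n : ℕ =>
        |(3 : ℝ) ^ n * (α₁ + a * α₂) - round ((3 : ℝ) ^ n * (α₁ + a * α₂))|)
      atTop (nhds 0)) :
    α₂ = 0 := by
  obtain ⟨q1, hq1⟩ := rat_of_pow_tendsto α₁ h1
  obtain ⟨q2, hq2⟩ := rat_of_pow_tendsto α₂ h2
  obtain ⟨q3, hq3⟩ := rat_of_pow_tendsto (α₁ + a * α₂) h3
  by_contra hne
  have hq2ne : q2 ≠ 0 := by
    intro h; apply hne; rw [hq2, h]; norm_num
  have hq2' : (q2:ℝ) ≠ 0 := by exact_mod_cast hq2ne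
  have h2' : a * α₂ = (q3:ℝ) - q1 := by linarith [hq3, hq1]
  apply ha
  refine ⟨(q3 - q1) / q2, ?_⟩
  push_cast
  rw [div_eq_iff hq2']
  rw [hq2] at h2'
  linarith [h2']
end

section
/- If t ∈ ℝ satisfies ‖3^n t‖_{ℝ/ℤ} → 0 as n → ∞ (distance to the nearest integer tends to zero), then t is a 3-adic rational: t = k/3^m for some integer k and natural number m. -/
open Filter

/-- If `‖3^n t‖_{ℝ/ℤ} → 0`, then `t` is a 3-adic rational: `t = k / 3^m`. -/
theorem triadic_rational_of_tendsto (t : ℝ)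
    (h : Tendsto (fun n : ℕ => |(3 : ℝ) ^ n * t - round ((3 : ℝ) ^ n * t)|)
      atTop (nhds 0)) :
    ∃ (k : ℤ) (m : ℕ), t = (k : ℝ) / 3 ^ m := by
  set ε : ℕ → ℝ := fun n => (3 : ℝ) ^ n * t - round ((3 : ℝ) ^ n * t) with hε
  have hsmall : ∀ᶠ n in atTop, |ε n| < 1/4 :=
    h.eventually (gt_mem_nhds (by norm_num : (0:ℝ) < 1/4))
  obtain ⟨m, hm⟩ := eventually_atTop.mp hsmall
  -- step: for n ≥ m, ε (n+1) = 3 * ε n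
  have step : ∀ n, m ≤ n → ε (n + 1) = 3 * ε n := by
    intro n hn
    have h1 : |ε n| < 1/4 := hm n hn
    have h2 : |ε (n + 1)| < 1/4 := hm (n + 1) (le_trans hn (Nat.le_succ n))
    have hint : 3 * ε n - ε (n + 1) =
        ((round ((3:ℝ) ^ (n+1) * t) - 3 * round ((3:ℝ) ^ n * t) : ℤ) : ℝ) := by
      simp only [hε]
      push_cast
      ring
    have habs : |3 * ε n - ε (n + 1)| < 1 := by
      calc |3 * ε n - ε (n + 1)| ≤ |3 * ε n| + |ε (n + 1)| := abs_sub _ _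
        _ = 3 * |ε n| + |ε (n + 1)| := by rw [abs_mul]; norm_num
        _ < 3 * (1/4) + 1/4 := by linarith
        _ = 1 := by norm_num
    rw [hint] at habs
    have : (round ((3:ℝ) ^ (n+1) * t) - 3 * round ((3:ℝ) ^ n * t) : ℤ) = 0 := by
      rw [← Int.cast_abs] at habs
      exact_mod_cast Int.abs_lt_one_iff.mp (by exact_mod_cast habs)
    have : 3 * ε n - ε (n + 1) = 0 := by rw [hint, this]; norm_num
    linarith
  -- hence ε (m + j) = 3 ^ j * ε m
  have iter : ∀ j, ε (m + j) = 3 ^ j * ε m := by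
    intro j
    induction j with
    | zero => simp
    | succ j ih =>
      have h2 := step (m + j) (Nat.le_add_right m j)
      show ε (m + j + 1) = 3 ^ (j + 1) * ε m
      rw [h2, ih, pow_succ]
      ring
  -- ε m = 0
  have hzero : ε m = 0 := by
    by_contra hne
    have hpos : 0 < |ε m| := abs_pos.mpr hne
    obtain ⟨j, hj⟩ := pow_unbounded_of_one_lt ((1/4) / |ε m|) (by norm_num : (1:ℝ) < 3)
    have h1 : |ε (m + j)| < 1/4 := hm (m + j) (Nat.le_add_right m j)
    rw [iter j, abs_mul, abs_pow, abs_of_pos (by norm_num : (0:ℝ) < 3)] at h1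
    rw [div_lt_iff₀ hpos] at hj
    linarith
  -- conclude
  refine ⟨round ((3:ℝ) ^ m * t), m, ?_⟩
  have h3 : (3:ℝ) ^ m * t = round ((3:ℝ) ^ m * t) := by
    simp only [hε] at hzero
    linarith
  have h9 : (3:ℝ) ^ m ≠ 0 := by positivity
  rw [eq_div_iff h9, mul_comm]
  exact h3
end
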